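/- Let u and k be positive integers and set Q := 2u+1. If a_1, …, a_k are sampled independently and uniformly at random from the integer interval {−u, …, u}, then Pr[a_1 + ⋯ + a_k = 0] ≥ Pr[a_1 + ⋯ + a_k ≡ 0 (mod Q)] / (2k+1). -/

import Mathlib

/-! Let `N k s` count the tuples in `{-u, …, u}^k` with sum `s`. It is even in `s`, and
`N (k + 1) s` is the sum of `N k` over the window `[s - u, s + u]`; sliding the window from `s`
to `s + 1 ≥ 1` trades `N k (s - u)` for `N k (s + u + 1)`, which is no larger by induction, so
`N k` is maximal at `0`. Since `|a_1 + ⋯ + a_k| ≤ k u < k (2u + 1)`, a sum divisible by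
`2u + 1` is one of the `2k + 1` values `ℓ (2u + 1)` with `|ℓ| ≤ k`, each attained at most
`N k 0` times. -/

open Finset

theorem Int.apply_le_apply_of_natAbs_le {α : Type*} [Preorder α] {f : ℤ → α}
    (heven : ∀ s, f (-s) = f s) (hanti : ∀ n : ℕ, f (n + 1) ≤ f n) {x y : ℤ}
    (h : y.natAbs ≤ x.natAbs) : f x ≤ f y := by
  have hf : ∀ z : ℤ, f z = f z.natAbs := fun z => by
    rcases Int.natAbs_eq z with hz | hz <;> nth_rw 1 [hz]
    exact heven _
  rw [hf x, hf y]
  exact antitone_nat_of_succ_le (f := fun n : ℕ => f n) (mod_cast hanti) h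

noncomputable def sumCount (u k : ℕ) (s : ℤ) : ℕ :=
  #{a ∈ Fintype.piFinset fun _ : Fin k => Icc (-(u : ℤ)) u | ∑ i, a i = s}

section sumCount

variable (u k : ℕ)

lemma sumCount_zero (s : ℤ) : sumCount u 0 s = if s = 0 then 1 else 0 := by
  by_cases hs : s = 0 <;> simp [sumCount, hs, eq_comm]

lemma sumCount_neg (s : ℤ) : sumCount u k (-s) = sumCount u k s := by
  refine card_nbij' (- ·) (- ·) ?_ ?_ (fun a _ => neg_neg a) (fun a _ => neg_neg a) <;>
  · intro a ha
    simp only [coe_filter, Set.mem_ofPred_eq, Fintype.mem_piFinset, mem_Icc, Pi.neg_apply,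
      sum_neg_distrib] at ha ⊢
    exact ⟨fun i => ⟨by linarith [(ha.1 i).2], by linarith [(ha.1 i).1]⟩, by omega⟩

lemma sumCount_succ (s : ℤ) :
    sumCount u (k + 1) s = ∑ t ∈ Icc (s - u) (s + u), sumCount u k t := by
  have hsplit :
      {a ∈ Fintype.piFinset fun _ : Fin (k + 1) => Icc (-(u : ℤ)) u | ∑ i, a i = s}.map
        (Fin.consEquiv fun _ => ℤ).symm.toEmbedding =
        {p ∈ Icc (-(u : ℤ)) u ×ˢ Fintype.piFinset fun _ : Fin k => Icc (-(u : ℤ)) u |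
          p.1 + ∑ i, p.2 i = s} := by
    ext ⟨j, b⟩
    simp [Fin.sum_univ_succ, Fin.forall_fin_succ]
  rw [sumCount, ← card_map, hsplit, card_filter, sum_product]
  refine sum_nbij' (s - ·) (s - ·) ?_ ?_ (fun _ _ => sub_sub_cancel s _)
    (fun _ _ => sub_sub_cancel s _) fun j _ => ?_
  · intro j hj; simp only [mem_Icc] at hj ⊢; omega
  · intro t ht; simp only [mem_Icc] at ht ⊢; omega
  · simp only [sumCount, card_filter, eq_sub_iff_add_eq']

lemma sumCount_natCast_succ_le (n : ℕ) : sumCount u k (n + 1) ≤ sumCount u k n := by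
  induction k generalizing n with
  | zero => rw [sumCount_zero, if_neg (by omega)]; exact Nat.zero_le _
  | succ k ih =>
    have hl :
        Icc (n - u : ℤ) (n + u) = insert (n - u : ℤ) (Icc (n + 1 - u : ℤ) (n + u)) := by
      ext t; simp only [mem_Icc, mem_insert]; omega
    have hr :
        Icc (n + 1 - u : ℤ) (n + 1 + u) = insert (n + u + 1 : ℤ) (Icc (n + 1 - u : ℤ) (n + u)) := by
      ext t; simp only [mem_Icc, mem_insert]; omega
    rw [sumCount_succ, sumCount_succ, hl, hr, sum_insert (by simp), sum_insert (by simp)]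
    gcongr
    exact Int.apply_le_apply_of_natAbs_le (sumCount_neg u k) ih (by omega)

lemma sumCount_le_sumCount_zero (s : ℤ) : sumCount u k s ≤ sumCount u k 0 :=
  Int.apply_le_apply_of_natAbs_le (sumCount_neg u k) (sumCount_natCast_succ_le u k) (by simp)

end sumCount

lemma abs_sum_le_of_mem_piFinset {u k : ℕ} {a : Fin k → ℤ}
    (ha : a ∈ Fintype.piFinset fun _ : Fin k => Icc (-(u : ℤ)) u) : |∑ i, a i| ≤ k * u := by
  simp only [Fintype.mem_piFinset, mem_Icc] at ha
  calc |∑ i, a i| ≤ ∑ i, |a i| := abs_sum_le_sum_abs _ _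
    _ ≤ ∑ _i : Fin k, (u : ℤ) := sum_le_sum fun i _ => abs_le.mpr (ha i)
    _ = k * u := by simp

lemma card_filter_dvd_sum_le (u k : ℕ) :
    #{a ∈ Fintype.piFinset (fun _ : Fin k => Icc (-(u : ℤ)) u) | 2 * (u : ℤ) + 1 ∣ ∑ i, a i}
      ≤ sumCount u k 0 * (2 * k + 1) := by
  set D :=
    {a ∈ Fintype.piFinset (fun _ : Fin k => Icc (-(u : ℤ)) u) | 2 * (u : ℤ) + 1 ∣ ∑ i, a i}
  have hQ : (0 : ℤ) < 2 * u + 1 := by positivity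
  have hmaps : ∀ a ∈ D, (∑ i, a i) / (2 * u + 1) ∈ Icc (-(k : ℤ)) k := by
    intro a ha
    rw [mem_filter] at ha
    obtain ⟨c, hc⟩ := ha.2
    have hbound := abs_sum_le_of_mem_piFinset ha.1
    rw [hc, abs_le] at hbound
    rw [hc, Int.mul_ediv_cancel_left _ hQ.ne', mem_Icc]
    constructor <;> nlinarith
  have hfibre :
      ∀ ℓ ∈ Icc (-(k : ℤ)) k, #{a ∈ D | (∑ i, a i) / (2 * u + 1) = ℓ} ≤ sumCount u k 0 := by
    intro ℓ _
    refine (card_le_card fun a ha => ?_).trans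
      (sumCount_le_sumCount_zero u k (ℓ * (2 * u + 1)))
    simp only [D, mem_filter] at ha ⊢
    exact ⟨ha.1.1, by rw [← ha.2, Int.ediv_mul_cancel ha.1.2]⟩
  calc #D ≤ sumCount u k 0 * #(Icc (-(k : ℤ)) k) :=
        card_le_mul_card_image_of_maps_to hmaps _ hfibre
    _ = sumCount u k 0 * (2 * k + 1) := by rw [Int.card_Icc]; congr 1; omega

theorem stmt_11_general (u k : ℕ) :
    (((Fintype.piFinset fun _ : Fin k => Finset.Icc (-(u : ℤ)) (u : ℤ)).filter
          (fun a : Fin k → ℤ => ∑ i, a i = 0)).card : ℝ) / (2 * (u : ℝ) + 1) ^ k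
      ≥ ((((Fintype.piFinset fun _ : Fin k => Finset.Icc (-(u : ℤ)) (u : ℤ)).filter
            (fun a : Fin k → ℤ => (2 * (u : ℤ) + 1) ∣ ∑ i, a i)).card : ℝ)
          / (2 * (u : ℝ) + 1) ^ k) / (2 * (k : ℝ) + 1) := by
  rw [ge_iff_le, div_right_comm]
  gcongr
  rw [div_le_iff₀ (by positivity)]
  exact_mod_cast card_filter_dvd_sum_le u k

/-- For positive integers `u, k` and `Q := 2u+1`, if `a_1, …, a_k` are
i.i.d. uniform in `{-u, …, u}`, then
`Pr[a_1 + ⋯ + a_k = 0] ≥ Pr[Q ∣ a_1 + ⋯ + a_k] / (2k+1)`. -/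
theorem stmt_11 (u k : ℕ) (hu : 1 ≤ u) (hk : 1 ≤ k) :
    (((Fintype.piFinset fun _ : Fin k => Finset.Icc (-(u : ℤ)) (u : ℤ)).filter
          (fun a : Fin k → ℤ => ∑ i, a i = 0)).card : ℝ) / (2 * (u : ℝ) + 1) ^ k
      ≥ ((((Fintype.piFinset fun _ : Fin k => Finset.Icc (-(u : ℤ)) (u : ℤ)).filter
            (fun a : Fin k → ℤ => (2 * (u : ℤ) + 1) ∣ ∑ i, a i)).card : ℝ)
          / (2 * (u : ℝ) + 1) ^ k) / (2 * (k : ℝ) + 1) :=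
  stmt_11_general u k
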